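/- Let G be a simple graph on n vertices, let t ≥ 2 be an integer, and let c = (c_i)_{i≥1} be a cost vector of nonnegative reals. Then there exists a complete multipartite graph H' on n vertices such that π*_t(G, c) ≤ π*_t(H', c). -/

import Mathlib

open scoped Classical
open Finset

/-- `K` is a clique of `G`: a nonempty set of pairwise adjacent vertices. -/
def IsCliqueOf {V : Type} [Fintype V] [DecidableEq V] (G : SimpleGraph V) (K : Finset V) : Prop :=
  K.Nonempty ∧ G.IsClique (K : Set V)

/-- Total `c`-cost of a weighting `f` of the finsets of vertices. -/
noncomputable def cliqueCost {V : Type} [Fintype V] [DecidableEq V]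
    (c : ℕ → ℝ) (f : Finset V → ℝ) : ℝ :=
  ∑ K : Finset V, c K.card * f K

/-- `f` is a fractional `t`-clique cover of `G`. -/
def IsFracCover {V : Type} [Fintype V] [DecidableEq V]
    (t : ℕ) (G : SimpleGraph V) (f : Finset V → ℝ) : Prop :=
  (∀ K, 0 ≤ f K) ∧ (∀ K, ¬ IsCliqueOf G K → f K = 0) ∧
  ∀ T : Finset V, T.card = t → G.IsClique (T : Set V) →
    1 ≤ ∑ K ∈ Finset.univ.filter (fun K => T ⊆ K), f K

/-- `f` is a fractional `t`-clique decomposition of `G`. -/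
def IsFracDecomp {V : Type} [Fintype V] [DecidableEq V]
    (t : ℕ) (G : SimpleGraph V) (f : Finset V → ℝ) : Prop :=
  (∀ K, 0 ≤ f K) ∧ (∀ K, ¬ IsCliqueOf G K → f K = 0) ∧
  ∀ T : Finset V, T.card = t → G.IsClique (T : Set V) →
    ∑ K ∈ Finset.univ.filter (fun K => T ⊆ K), f K = 1

/-- `f` is an integer (`{0,1}`-valued) `t`-clique cover of `G`. -/
def IsIntCover {V : Type} [Fintype V] [DecidableEq V]
    (t : ℕ) (G : SimpleGraph V) (f : Finset V → ℝ) : Prop :=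
  IsFracCover t G f ∧ ∀ K, f K = 0 ∨ f K = 1

/-- `f` is an integer (`{0,1}`-valued) `t`-clique decomposition of `G`. -/
def IsIntDecomp {V : Type} [Fintype V] [DecidableEq V]
    (t : ℕ) (G : SimpleGraph V) (f : Finset V → ℝ) : Prop :=
  IsFracDecomp t G f ∧ ∀ K, f K = 0 ∨ f K = 1

/-- θ*_t(G,c): minimum total c-cost of a fractional t-clique cover. -/
noncomputable def thetaFrac {V : Type} [Fintype V] [DecidableEq V]
    (t : ℕ) (G : SimpleGraph V) (c : ℕ → ℝ) : ℝ :=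
  sInf { x | ∃ f, IsFracCover t G f ∧ x = cliqueCost c f }

/-- θ_t(G,c): minimum total c-cost of an integer t-clique cover. -/
noncomputable def thetaInt {V : Type} [Fintype V] [DecidableEq V]
    (t : ℕ) (G : SimpleGraph V) (c : ℕ → ℝ) : ℝ :=
  sInf { x | ∃ f, IsIntCover t G f ∧ x = cliqueCost c f }

/-- π*_t(G,c): minimum total c-cost of a fractional t-clique decomposition. -/
noncomputable def piFrac {V : Type} [Fintype V] [DecidableEq V]
    (t : ℕ) (G : SimpleGraph V) (c : ℕ → ℝ) : ℝ :=
  sInf { x | ∃ f, IsFracDecomp t G f ∧ x = cliqueCost c f }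

/-- π_t(G,c): minimum total c-cost of an integer t-clique decomposition. -/
noncomputable def piInt {V : Type} [Fintype V] [DecidableEq V]
    (t : ℕ) (G : SimpleGraph V) (c : ℕ → ℝ) : ℝ :=
  sInf { x | ∃ f, IsIntDecomp t G f ∧ x = cliqueCost c f }

/-- `G` is complete multipartite: vertices can be assigned to parts so that
adjacency holds exactly between distinct parts. -/
def IsCompleteMultipartite {V : Type} [Fintype V] [DecidableEq V]
    (G : SimpleGraph V) : Prop :=
  ∃ p : V → ℕ, ∀ u v, G.Adj u v ↔ p u ≠ p v

/-!
LP duality identifies `π*_t(H, c)` with the supremum of `∑ T, y T` over the dual constraints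
`∑_{T ⊆ K, |T| = t} y T ≤ c |K|` (for all cliques `K`), with `y` supported on the `t`-cliques.
If `u ≁ v`, a dual solution `y` of `H` is carried to dual solutions of the two graphs in which
`v` is made a copy of `u` and vice versa, by renaming `v ↦ u` (resp. `u ↦ v`) in each `t`-clique;
the two values add up to twice the value of `y`. Hence, if `H` maximises `π*_t`, so do both
clonings, and Zykov symmetrisation of an edge-maximal maximiser (as in Turán's theorem) shows
that non-adjacency is transitive in it, i.e. it is complete multipartite.
-/

open Matrix

section StandardFormLP

variable {ι κ : Type*} [Fintype ι] [Fintype κ]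

lemma convex_setOf_nonneg_dotProduct_le (c : ι → ℝ) (lam : ℝ) :
    Convex ℝ {f : ι → ℝ | 0 ≤ f ∧ c ⬝ᵥ f ≤ lam} :=
  (convex_Ici 0).inter
    (convex_halfSpace_le ⟨dotProduct_add c, fun a f => dotProduct_smul a c f⟩ lam)

lemma isCompact_setOf_nonneg_dotProduct_le {c : ι → ℝ} (hc : ∀ i, 0 < c i) (lam : ℝ) :
    IsCompact {f : ι → ℝ | 0 ≤ f ∧ c ⬝ᵥ f ≤ lam} := by
  refine (isCompact_Icc (a := 0) (b := fun i => lam / c i)).of_isClosed_subset ?_ ?_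
  · exact (isClosed_le continuous_const continuous_id).inter
      (isClosed_le (continuous_const.dotProduct continuous_id) continuous_const)
  · rintro f ⟨hf, hcf⟩
    refine ⟨hf, fun i => (le_div_iff₀' (hc i)).2 ?_⟩
    calc c i * f i ≤ c ⬝ᵥ f :=
          Finset.single_le_sum (f := fun j => c j * f j)
            (fun j _ => mul_nonneg (hc j).le (hf j)) (Finset.mem_univ i)
      _ ≤ lam := hcf

theorem exists_vecMul_le_of_forall_lt_dotProduct (A : Matrix κ ι ℝ) (b : κ → ℝ) {c : ι → ℝ}
    (hc : ∀ i, 0 < c i) {lam : ℝ} (hlam : 0 < lam)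
    (h : ∀ f, 0 ≤ f → A *ᵥ f = b → lam < c ⬝ᵥ f) :
    ∃ y, y ᵥ* A ≤ c ∧ lam < b ⬝ᵥ y := by
  set P : Set (ι → ℝ) := {f | 0 ≤ f ∧ c ⬝ᵥ f ≤ lam}
  have hb : b ∉ A.mulVecLin '' P := by
    rintro ⟨f, ⟨hf, hcf⟩, hAf⟩
    exact (h f hf hAf).not_ge hcf
  obtain ⟨φ, u, hφP, hφb⟩ := geometric_hahn_banach_closed_point
    ((convex_setOf_nonneg_dotProduct_le c lam).linear_image A.mulVecLin)
    ((isCompact_setOf_nonneg_dotProduct_le hc lam).image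
      A.mulVecLin.continuous_of_finiteDimensional).isClosed hb
  set w : κ → ℝ := fun k => φ (Pi.single k 1)
  have hφ : ∀ x, φ x = w ⬝ᵥ x := fun x => by
    conv_lhs => rw [pi_eq_sum_univ' x]
    simp [w, dotProduct, mul_comm]
  have hu : 0 < u := by simpa using hφP 0 ⟨0, ⟨le_rfl, by simp [hlam.le]⟩, map_zero _⟩
  -- evaluating at the vertices `(lam / c i) • eᵢ` of `P` bounds `w ᵥ* A` by `(u / lam) • c`
  refine ⟨(lam / u) • w, fun i => ?_, ?_⟩
  · have hi : Pi.single i (lam / c i) ∈ P := by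
      refine ⟨Pi.single_nonneg.2 (div_nonneg hlam.le (hc i).le), ?_⟩
      rw [dotProduct_single, mul_div_cancel₀ _ (hc i).ne']
    have := hφP _ ⟨_, hi, rfl⟩
    rw [hφ, mulVecLin_apply, dotProduct_mulVec, dotProduct_single] at this
    rw [smul_vecMul, Pi.smul_apply, smul_eq_mul, div_mul_eq_mul_div, div_le_iff₀ hu]
    rw [mul_div_assoc', div_lt_iff₀ (hc i)] at this
    linarith
  · rw [dotProduct_smul, smul_eq_mul, dotProduct_comm, ← hφ, div_mul_eq_mul_div,
      lt_div_iff₀ hu]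
    exact mul_lt_mul_of_pos_left hφb hlam

end StandardFormLP

lemma Equiv.coe_finsetCongr {α β : Type*} (e : α ≃ β) (s : Finset α) :
    (e.finsetCongr s : Set β) = e '' s := by
  simp

lemma Equiv.finsetCongr_swap_apply_of_notMem_of_notMem {α : Type*} [DecidableEq α] {a b : α}
    {s : Finset α} (ha : a ∉ s) (hb : b ∉ s) : (Equiv.swap a b).finsetCongr s = s := by
  ext x
  simp only [Equiv.finsetCongr_apply, Finset.mem_map_equiv, Equiv.symm_swap]
  rcases eq_or_ne x a with rfl | hxa
  · simp [ha, hb]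
  rcases eq_or_ne x b with rfl | hxb
  · simp [ha, hb]
  rw [Equiv.swap_apply_of_ne_of_ne hxa hxb]

namespace SimpleGraph

lemma IsCompleteMultipartite.exists_adj_iff_ne {V : Type*} [Finite V] {G : SimpleGraph V}
    (h : G.IsCompleteMultipartite) : ∃ p : V → ℕ, ∀ u v, G.Adj u v ↔ p u ≠ p v := by
  refine ⟨fun x => Finite.equivFin _ (Quotient.mk h.setoid x), fun u v => ?_⟩
  rw [Ne, Fin.val_inj, (Finite.equivFin _).injective.eq_iff, Quotient.eq]
  exact not_not.symm

section ReplaceVertex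

variable {V : Type*} [DecidableEq V] {G : SimpleGraph V} {s t u : V}

lemma adj_replaceVertex_iff_adj_swap {x y : V} (hx : x ≠ s) (hy : y ≠ s) :
    (G.replaceVertex s t).Adj x y ↔ G.Adj (Equiv.swap s t x) (Equiv.swap s t y) := by
  unfold replaceVertex
  simp only [Equiv.swap_apply_def, hx, hy, if_false]
  split_ifs <;> simp_all [adj_comm]

lemma isClique_replaceVertex_iff_of_notMem {A : Set V} (ht : t ∉ A) :
    (G.replaceVertex s t).IsClique A ↔ G.IsClique A := by
  refine forall₄_congr fun x hx y hy => imp_congr_right fun _ => ?_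
  exact adj_replaceVertex_iff_of_ne _ _ (ne_of_mem_of_not_mem hx ht)
    (ne_of_mem_of_not_mem hy ht)

lemma isClique_replaceVertex_iff_isClique_image_swap {A : Set V} (hs : s ∉ A) :
    (G.replaceVertex s t).IsClique A ↔ G.IsClique (Equiv.swap s t '' A) := by
  rw [IsClique, IsClique, (Equiv.swap s t).injective.injOn.pairwise_image]
  refine forall₄_congr fun x hx y hy => imp_congr_right fun _ => ?_
  exact adj_replaceVertex_iff_adj_swap (ne_of_mem_of_not_mem hx hs) (ne_of_mem_of_not_mem hy hs)

variable [Fintype V] [DecidableRel G.Adj]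

lemma neighborFinset_replaceVertex_left (hst : ¬G.Adj s t) :
    (G.replaceVertex s t).neighborFinset s = G.neighborFinset s := by
  ext w
  simp only [mem_neighborFinset]
  rcases eq_or_ne w t with rfl | hw
  · simp [not_adj_replaceVertex_same, hst]
  · exact adj_replaceVertex_iff_of_ne_left _ _ hw

lemma neighborFinset_replaceVertex_of_not_adj_of_ne (hus : ¬G.Adj u s) (hut : u ≠ t) :
    (G.replaceVertex s t).neighborFinset u = (G.neighborFinset u).erase t := by
  ext w
  simp only [mem_neighborFinset, Finset.mem_erase]
  rcases eq_or_ne w t with rfl | hw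
  · simp [replaceVertex, hut, hus]
  · rw [adj_replaceVertex_iff_of_ne _ _ hut hw]
    exact (and_iff_right hw).symm

end ReplaceVertex

section Symmetrisation

variable {V : Type*} [DecidableEq V] {φ : SimpleGraph V → ℝ} {G : SimpleGraph V} {s t u : V}
  (hφ : ∀ (H : SimpleGraph V) (a b : V), a ≠ b → ¬H.Adj a b →
    2 * φ H ≤ φ (H.replaceVertex a b) + φ (H.replaceVertex b a))
include hφ

lemma forall_le_replaceVertex (hG : ∀ H, φ H ≤ φ G) (hst : ¬G.Adj s t) (H : SimpleGraph V) :
    φ H ≤ φ (G.replaceVertex s t) := by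
  rcases eq_or_ne s t with rfl | hne
  · simpa using hG H
  linarith [hφ G s t hne hst, hG H, hG (G.replaceVertex t s)]

variable [Fintype V] [DecidableRel G.Adj]

lemma IsExtremal.degree_le_of_not_adj (hG : G.IsExtremal fun H => ∀ H', φ H' ≤ φ H)
    (hst : ¬G.Adj s t) : G.degree s ≤ G.degree t := by
  have := hG.2 (forall_le_replaceVertex hφ hG.1 hst)
  rw [card_edgeFinset_replaceVertex_of_not_adj _ hst] at this
  omega

lemma IsExtremal.not_adj_trans (hG : G.IsExtremal fun H => ∀ H', φ H' ≤ φ H) (hts : ¬G.Adj t s)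
    (hsu : ¬G.Adj s u) : ¬G.Adj t u := by
  intro htu
  have hst : ¬G.Adj s t := fun h => hts h.symm
  have htu' : t ≠ u := G.ne_of_adj htu
  have hdeg_st := hG.degree_le_of_not_adj hφ hts
  have hdeg_us := hG.degree_le_of_not_adj hφ fun h => hsu h.symm
  have hsu₁ : ¬(G.replaceVertex s t).Adj s u := by
    rwa [adj_replaceVertex_iff_of_ne_left _ _ htu'.symm]
  -- making first `t` and then `u` a copy of `s` would keep `φ` maximal and gain an edge
  have hedges := hG.2 <|
    forall_le_replaceVertex hφ (forall_le_replaceVertex hφ hG.1 hst) hsu₁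
  have hdeg_s : (G.replaceVertex s t).degree s = G.degree s := by
    rw [← card_neighborFinset_eq_degree, ← card_neighborFinset_eq_degree,
      neighborFinset_replaceVertex_left hst]
  have hdeg_u : (G.replaceVertex s t).degree u = G.degree u - 1 := by
    rw [← card_neighborFinset_eq_degree, ← card_neighborFinset_eq_degree,
      neighborFinset_replaceVertex_of_not_adj_of_ne (fun h => hsu h.symm) htu'.symm,
      Finset.card_erase_of_mem ((mem_neighborFinset _ _ _).2 htu.symm)]
  have hpos : 0 < G.degree u := (G.degree_pos_iff_exists_adj u).2 ⟨t, htu.symm⟩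
  rw [card_edgeFinset_replaceVertex_of_not_adj _ hsu₁,
    card_edgeFinset_replaceVertex_of_not_adj _ hst, hdeg_s, hdeg_u] at hedges
  omega

theorem exists_isCompleteMultipartite_forall_le :
    ∃ G : SimpleGraph V, G.IsCompleteMultipartite ∧ ∀ H, φ H ≤ φ G := by
  obtain ⟨G, _, hG⟩ := (exists_isExtremal_iff_exists fun G => ∀ H, φ H ≤ φ G).2
    (Finite.exists_max φ)
  exact ⟨G, ⟨fun t s u => hG.not_adj_trans hφ⟩, hG.1⟩

end Symmetrisation

end SimpleGraph

section DualReplaceVertex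

variable {V : Type*} [DecidableEq V] {y : Finset V → ℝ} {u v : V}

def dualReplaceVertex (u v : V) (y : Finset V → ℝ) (T : Finset V) : ℝ :=
  if v ∈ T then y ((Equiv.swap u v).finsetCongr T) else y T

lemma dualReplaceVertex_of_notMem_right {T : Finset V} (hv : v ∉ T) :
    dualReplaceVertex u v y T = y T := if_neg hv

lemma dualReplaceVertex_of_notMem_left {T : Finset V} (hu : u ∉ T) :
    dualReplaceVertex u v y T = y ((Equiv.swap u v).finsetCongr T) := by
  by_cases hv : v ∈ T
  · exact if_pos hv
  · rw [dualReplaceVertex_of_notMem_right hv,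
      Equiv.finsetCongr_swap_apply_of_notMem_of_notMem hu hv]

end DualReplaceVertex

section Duality

variable {V : Type} [Fintype V] [DecidableEq V] {t : ℕ} {c : ℕ → ℝ} {H : SimpleGraph V}

/-- Feasible points of the LP dual to `π*_t(H, c)` (free in sign). -/
def IsDualFeasible (t : ℕ) (c : ℕ → ℝ) (H : SimpleGraph V) (y : Finset V → ℝ) : Prop :=
  (∀ T : Finset V, ¬(T.card = t ∧ H.IsClique (T : Set V)) → y T = 0) ∧
  ∀ K, IsCliqueOf H K → ∑ T ∈ K.powersetCard t, y T ≤ c K.card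

lemma exists_isFracDecomp (ht : 0 < t) (H : SimpleGraph V) : ∃ f, IsFracDecomp t H f := by
  refine ⟨fun K => if K.card = t ∧ H.IsClique (K : Set V) then 1 else 0,
    fun K => by positivity, fun K hK => if_neg fun h => hK ⟨?_, h.2⟩, fun T hT hTcl => ?_⟩
  · exact Finset.card_pos.1 (h.1 ▸ ht)
  · rw [Finset.sum_ite, Finset.sum_const_zero, add_zero, Finset.sum_const, nsmul_one,
      Nat.cast_eq_one, Finset.card_eq_one]
    refine ⟨T, Finset.eq_singleton_iff_unique_mem.2 ⟨by simp [hT, hTcl], fun K hK => ?_⟩⟩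
    simp only [Finset.mem_filter, Finset.mem_univ, true_and] at hK
    exact (Finset.eq_of_subset_of_card_le hK.1 (by rw [hK.2.1, hT])).symm

lemma cliqueCost_nonneg (hc : ∀ i, 1 ≤ i → 0 ≤ c i) {f : Finset V → ℝ}
    (hf : IsFracDecomp t H f) : 0 ≤ cliqueCost c f := by
  refine Finset.sum_nonneg fun K _ => ?_
  by_cases hK : IsCliqueOf H K
  · exact mul_nonneg (hc _ (Finset.card_pos.2 hK.1)) (hf.1 K)
  · rw [hf.2.1 K hK, mul_zero]

lemma piFrac_nonneg (hc : ∀ i, 1 ≤ i → 0 ≤ c i) : 0 ≤ piFrac t H c :=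
  Real.sInf_nonneg <| by rintro _ ⟨f, hf, rfl⟩; exact cliqueCost_nonneg hc hf

lemma piFrac_le_cliqueCost (hc : ∀ i, 1 ≤ i → 0 ≤ c i) {f : Finset V → ℝ}
    (hf : IsFracDecomp t H f) : piFrac t H c ≤ cliqueCost c f :=
  csInf_le ⟨0, by rintro _ ⟨f, hf, rfl⟩; exact cliqueCost_nonneg hc hf⟩ ⟨f, hf, rfl⟩

lemma IsDualFeasible.sum_le_piFrac {y : Finset V → ℝ} (hy : IsDualFeasible t c H y)
    (ht : 0 < t) : ∑ T, y T ≤ piFrac t H c := by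
  obtain ⟨f₀, hf₀⟩ := exists_isFracDecomp ht H
  refine le_csInf ⟨_, f₀, hf₀, rfl⟩ ?_
  rintro _ ⟨f, ⟨hf, hfK, hfT⟩, rfl⟩
  calc ∑ T, y T = ∑ T with T.card = t, ∑ K with T ⊆ K, y T * f K := by
        rw [Finset.sum_filter]
        refine Finset.sum_congr rfl fun T _ => ?_
        by_cases hT : T.card = t ∧ H.IsClique (T : Set V)
        · rw [if_pos hT.1, ← Finset.mul_sum, hfT T hT.1 hT.2, mul_one]
        · rw [hy.1 T hT]
          split_ifs <;> simp
    _ = ∑ K, ∑ T ∈ K.powersetCard t, y T * f K :=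
        Finset.sum_comm' fun T K => by simp [Finset.mem_powersetCard, and_comm]
    _ ≤ cliqueCost c f := by
        refine Finset.sum_le_sum fun K _ => ?_
        rw [← Finset.sum_mul]
        by_cases hK : IsCliqueOf H K
        · exact mul_le_mul_of_nonneg_right (hy.2 K hK) (hf K)
        · rw [hfK K hK, mul_zero, mul_zero]

/- `π*_t(H, c)` as the standard-form LP `min {c' ⬝ᵥ f | 0 ≤ f, A *ᵥ f = b}` indexed by all
finsets, non-cliques having zero columns; `δ > 0` is added to the cost to make it positive. -/

noncomputable def cliqueIncidence (t : ℕ) (H : SimpleGraph V) : Matrix (Finset V) (Finset V) ℝ :=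
  .of fun T K => if T.card = t ∧ T ⊆ K ∧ IsCliqueOf H K then 1 else 0

noncomputable def tCliqueIndicator (t : ℕ) (H : SimpleGraph V) (T : Finset V) : ℝ :=
  if T.card = t ∧ H.IsClique (T : Set V) then 1 else 0

noncomputable def perturbedCost (c : ℕ → ℝ) (H : SimpleGraph V) (δ : ℝ) (K : Finset V) : ℝ :=
  (if IsCliqueOf H K then c K.card else 0) + δ

lemma piFrac_le_perturbedCost_dotProduct (hc : ∀ i, 1 ≤ i → 0 ≤ c i) {δ : ℝ} (hδ : 0 ≤ δ)
    {f : Finset V → ℝ} (hf : 0 ≤ f) (hAf : cliqueIncidence t H *ᵥ f = tCliqueIndicator t H) :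
    piFrac t H c ≤ perturbedCost c H δ ⬝ᵥ f := by
  have hf : ∀ K, 0 ≤ f K := hf
  set f' : Finset V → ℝ := fun K => if IsCliqueOf H K then f K else 0
  have hf' : IsFracDecomp t H f' := by
    refine ⟨fun K => ?_, fun K hK => if_neg hK, fun T hT hTcl => ?_⟩
    · by_cases hK : IsCliqueOf H K <;> simp [f', hK, hf K]
    · simpa [cliqueIncidence, tCliqueIndicator, mulVec, dotProduct, hT, hTcl, f',
        Finset.sum_filter, ite_and] using congr_fun hAf T
  calc piFrac t H c ≤ cliqueCost c f' := piFrac_le_cliqueCost hc hf'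
    _ ≤ perturbedCost c H δ ⬝ᵥ f := by
      refine Finset.sum_le_sum fun K _ => ?_
      by_cases hK : IsCliqueOf H K <;> simp [f', perturbedCost, hK] <;> nlinarith [hf K]

lemma exists_isDualFeasible_of_vecMul_le (hc : ∀ i, 1 ≤ i → 0 ≤ c i) {δ : ℝ} (hδ : 0 ≤ δ)
    {y : Finset V → ℝ} (hy : y ᵥ* cliqueIncidence t H ≤ perturbedCost c H δ) :
    ∃ z, IsDualFeasible t c H z ∧
      tCliqueIndicator t H ⬝ᵥ y - δ * Fintype.card (Finset V) ≤ ∑ T, z T := by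
  -- lowering each `t`-clique variable by `δ` absorbs the `δ` in every constraint that meets one
  refine ⟨fun T => if T.card = t ∧ H.IsClique (T : Set V) then y T - δ else 0,
    ⟨fun T hT => if_neg hT, fun K hK => ?_⟩, ?_⟩
  · have hyK : ∑ T ∈ K.powersetCard t, y T ≤ c K.card + δ := by
      have := hy K
      simp only [vecMul, dotProduct, cliqueIncidence, perturbedCost, of_apply, hK, and_true,
        if_true, mul_ite, mul_one, mul_zero, ← Finset.sum_filter] at this
      convert this using 2
      ext T
      simp [Finset.mem_powersetCard, and_comm]
    have hsum : ∑ T ∈ K.powersetCard t,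
        (if T.card = t ∧ H.IsClique (T : Set V) then y T - δ else 0)
        = ∑ T ∈ K.powersetCard t, y T - (K.powersetCard t).card * δ := by
      rw [Finset.sum_congr rfl fun T hT => if_pos ⟨(Finset.mem_powersetCard.1 hT).2,
        hK.2.subset (by simpa using (Finset.mem_powersetCard.1 hT).1)⟩, Finset.sum_sub_distrib,
        Finset.sum_const, nsmul_eq_mul]
    rcases (K.powersetCard t).eq_empty_or_nonempty with he | hne
    · simpa [he] using hc _ (Finset.card_pos.2 hK.1)
    · have : (1 : ℝ) ≤ (K.powersetCard t).card := by exact_mod_cast hne.card_pos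
      rw [hsum]
      nlinarith
  · calc tCliqueIndicator t H ⬝ᵥ y - δ * Fintype.card (Finset V)
        = ∑ T, (tCliqueIndicator t H T * y T - δ) := by
          simp [dotProduct, Finset.sum_sub_distrib, mul_comm]
      _ ≤ _ := Finset.sum_le_sum fun T _ => by
        by_cases hT : T.card = t ∧ H.IsClique (T : Set V) <;> simp [tCliqueIndicator, hT, hδ]

lemma exists_isDualFeasible_lt_sum (hc : ∀ i, 1 ≤ i → 0 ≤ c i) {lam : ℝ} (hlam : 0 < lam)
    (h : lam < piFrac t H c) : ∃ y, IsDualFeasible t c H y ∧ lam < ∑ T, y T := by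
  set N : ℝ := (Fintype.card (Finset V) : ℝ)
  set δ := (piFrac t H c - lam) / (N + 1)
  have hδ : 0 < δ := div_pos (by linarith) (by positivity)
  have hδN : lam + δ * N < piFrac t H c := by
    have : δ * (N + 1) = piFrac t H c - lam := div_mul_cancel₀ _ (by positivity)
    nlinarith
  have hcost : ∀ K, 0 < perturbedCost c H δ K := fun K => by
    by_cases hK : IsCliqueOf H K
    · simpa [perturbedCost, hK] using add_pos_of_nonneg_of_pos (hc _ (Finset.card_pos.2 hK.1)) hδ
    · simpa [perturbedCost, hK] using hδ
  obtain ⟨y, hyA, hyb⟩ := exists_vecMul_le_of_forall_lt_dotProduct _ _ hcost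
    (by positivity : 0 < lam + δ * N) fun f hf hAf =>
      hδN.trans_le (piFrac_le_perturbedCost_dotProduct hc hδ.le hf hAf)
  obtain ⟨z, hz, hzy⟩ := exists_isDualFeasible_of_vecMul_le hc hδ.le hyA
  exact ⟨z, hz, by linarith⟩

variable {y : Finset V → ℝ} {u v : V}

lemma sum_dualReplaceVertex (u v : V) (y : Finset V → ℝ) :
    ∑ T, dualReplaceVertex u v y T = ∑ T with v ∉ T, y T + ∑ T with u ∈ T, y T := by
  rw [← Finset.sum_filter_not_add_sum_filter _ (v ∈ ·)]
  congr 1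
  · exact Finset.sum_congr rfl fun T hT => if_neg (Finset.mem_filter.1 hT).2
  · rw [Finset.sum_filter, Finset.sum_filter]
    refine Fintype.sum_equiv (Equiv.swap u v).finsetCongr _ _ fun T => ?_
    simp only [dualReplaceVertex, Equiv.finsetCongr_apply, Finset.mem_map_equiv, Equiv.symm_swap,
      Equiv.swap_apply_left]
    split_ifs <;> rfl

lemma IsDualFeasible.dualReplaceVertex (hy : IsDualFeasible t c H y) (hne : u ≠ v)
    (huv : ¬H.Adj u v) : IsDualFeasible t c (H.replaceVertex u v) (dualReplaceVertex u v y) := by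
  refine ⟨fun T hT => ?_, fun K ⟨hKne, hK⟩ => ?_⟩
  · by_cases hv : v ∈ T
    · simp only [_root_.dualReplaceVertex, if_pos hv]
      refine hy.1 _ fun ⟨hcard, hcl⟩ => hT ⟨by simpa using hcard, ?_⟩
      have hu : u ∉ T := fun hu => huv <| hcl (by simpa [Finset.mem_map_equiv] using hv)
        (by simpa [Finset.mem_map_equiv] using hu) hne
      rwa [SimpleGraph.isClique_replaceVertex_iff_isClique_image_swap (by simpa),
        ← Equiv.coe_finsetCongr]
    · rw [dualReplaceVertex_of_notMem_right hv]
      exact hy.1 T fun ⟨hcard, hcl⟩ =>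
        hT ⟨hcard, (SimpleGraph.isClique_replaceVertex_iff_of_notMem (by simpa)).2 hcl⟩
  · by_cases hu : u ∈ K
    · have hv : v ∉ K := fun hv =>
        (H.not_adj_replaceVertex_same u v) (hK (by simpa) (by simpa) hne)
      have := hy.2 K ⟨hKne, (SimpleGraph.isClique_replaceVertex_iff_of_notMem (by simpa)).1 hK⟩
      refine (Finset.sum_congr rfl fun T hT => ?_).trans_le this
      exact dualReplaceVertex_of_notMem_right fun hvT =>
        hv ((Finset.mem_powersetCard.1 hT).1 hvT)
    · have hσK : IsCliqueOf H ((Equiv.swap u v).finsetCongr K) := ⟨by simpa using hKne, by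
        rwa [Equiv.coe_finsetCongr,
          ← SimpleGraph.isClique_replaceVertex_iff_isClique_image_swap (by simpa)]⟩
      have := hy.2 _ hσK
      rw [Equiv.finsetCongr_apply, Finset.powersetCard_map, Finset.sum_map, Finset.card_map]
        at this
      refine (Finset.sum_congr rfl fun T hT => ?_).trans_le this
      exact dualReplaceVertex_of_notMem_left fun huT => hu ((Finset.mem_powersetCard.1 hT).1 huT)

theorem two_mul_piFrac_le_piFrac_replaceVertex_add (ht : 0 < t) (hc : ∀ i, 1 ≤ i → 0 ≤ c i)
    (hne : u ≠ v) (huv : ¬H.Adj u v) :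
    2 * piFrac t H c ≤ piFrac t (H.replaceVertex u v) c + piFrac t (H.replaceVertex v u) c := by
  refine le_of_forall_lt_imp_le_of_dense fun x hx => ?_
  rcases le_or_gt x 0 with hx0 | hx0
  · linarith [piFrac_nonneg hc (t := t) (H := H.replaceVertex u v),
      piFrac_nonneg hc (t := t) (H := H.replaceVertex v u)]
  obtain ⟨y, hy, hxy⟩ := exists_isDualFeasible_lt_sum hc (half_pos hx0)
    (by linarith : x / 2 < piFrac t H c)
  have h₁ := (hy.dualReplaceVertex hne huv).sum_le_piFrac ht
  have h₂ := (hy.dualReplaceVertex hne.symm fun h => huv h.symm).sum_le_piFrac ht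
  rw [sum_dualReplaceVertex] at h₁ h₂
  linarith [Finset.sum_filter_not_add_sum_filter Finset.univ (v ∈ ·) y,
    Finset.sum_filter_not_add_sum_filter Finset.univ (u ∈ ·) y]

end Duality

/-- Theorem 1.7 (decomposition part): the fractional `t`-clique decomposition
number of any `n`-vertex graph is at most that of some `n`-vertex complete
multipartite graph. -/
theorem stmt3 (n t : ℕ) (ht : 2 ≤ t) (c : ℕ → ℝ) (hc : ∀ i, 1 ≤ i → 0 ≤ c i)
    (G : SimpleGraph (Fin n)) :
    ∃ H' : SimpleGraph (Fin n), IsCompleteMultipartite H' ∧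
      piFrac t G c ≤ piFrac t H' c := by
  obtain ⟨H, hH, hmax⟩ := SimpleGraph.exists_isCompleteMultipartite_forall_le
    (φ := fun H : SimpleGraph (Fin n) => piFrac t H c) fun H u v hne huv =>
      two_mul_piFrac_le_piFrac_replaceVertex_add (by omega) hc hne huv
  exact ⟨H, hH.exists_adj_iff_ne, hmax G⟩
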